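/- Let Ω ⊆ ℝⁿ be nonempty, r₁ > 1 and α with r₁ < α. Suppose Q is a cube with r₁·diam Q ≤ dist(Q, Ω) ≤ r₂·diam Q, and R is a cube with R ∩ Q ≠ ∅ and dist(R, Ω) ≤ α·diam R. Then diam Q ≤ ((α+1)/(r₁−1))·diam R, and hence Q ⊆ γR with γ := 2(α+1)/(r₁−1) + 1. -/

import Mathlib

open MeasureTheory ENNReal

noncomputable section

/-- An axis-parallel cube in `ℝⁿ`, given by its center and (positive) side length. -/
structure Cube (n : ℕ) where
  center : EuclideanSpace ℝ (Fin n)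
  side : ℝ
  side_pos : 0 < side

namespace Cube

variable {n : ℕ}

/-- The (closed) cube as a subset of `ℝⁿ`. -/
def toSet (Q : Cube n) : Set (EuclideanSpace ℝ (Fin n)) :=
  {x | ∀ i, |x i - Q.center i| ≤ Q.side / 2}

/-- The volume `|Q| = side^n` of a cube. -/
def vol (Q : Cube n) : ℝ := Q.side ^ n

/-- The Euclidean diameter `√n · side` of a cube. -/
def diam (Q : Cube n) : ℝ := Real.sqrt n * Q.side

/-- The concentric dilation `tQ` of a cube. -/
def dilate (Q : Cube n) (t : ℝ) (ht : 0 < t) : Cube n :=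
  ⟨Q.center, t * Q.side, mul_pos ht Q.side_pos⟩

/-- A dyadic child of a cube, indexed by a choice of sign in each coordinate. -/
def child (Q : Cube n) (s : Fin n → Bool) : Cube n :=
  ⟨WithLp.toLp 2 (fun i => Q.center i + (if s i then (1 : ℝ) else -1) * Q.side / 4), Q.side / 2, by
    have := Q.side_pos; linarith⟩

end Cube

/-- Distance between two sets in `ℝⁿ`: `inf {dist x y : x ∈ A, y ∈ B}`. -/
def setDist {n : ℕ} (A B : Set (EuclideanSpace ℝ (Fin n))) : ℝ :=
  ⨅ (x : A) (y : B), dist (x : EuclideanSpace ℝ (Fin n)) (y : EuclideanSpace ℝ (Fin n))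

/-- The average `⟨|f|⟩_Q = (1/|Q|) ∫_Q |f|` (as an extended nonnegative real). -/
def avg {n : ℕ} (Q : Cube n) (f : EuclideanSpace ℝ (Fin n) → ℝ) : ℝ≥0∞ :=
  (ENNReal.ofReal Q.vol)⁻¹ * ∫⁻ x in Q.toSet, ENNReal.ofReal |f x|

/-- The Hardy–Littlewood maximal operator over axis-parallel cubes. -/
def maximal {n : ℕ} (f : EuclideanSpace ℝ (Fin n) → ℝ)
    (x : EuclideanSpace ℝ (Fin n)) : ℝ≥0∞ :=
  ⨆ (Q : Cube n) (_ : x ∈ Q.toSet), avg Q f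

/-- Weighted Morrey norm adapted to a family `F` of cubes, for `ℝ≥0∞`-valued `f`:
`sup_{Q ∈ F} ((1/|Q|^λ) ∫_Q f^p w)^{1/p}`. -/
def morreyNormE {n : ℕ} (F : Set (Cube n)) (lam p : ℝ)
    (w : EuclideanSpace ℝ (Fin n) → ℝ) (f : EuclideanSpace ℝ (Fin n) → ℝ≥0∞) : ℝ≥0∞ :=
  ⨆ (Q : Cube n) (_ : Q ∈ F),
    ((ENNReal.ofReal (Q.vol ^ lam))⁻¹ *
      ∫⁻ x in Q.toSet, (f x) ^ p * ENNReal.ofReal (w x)) ^ (1 / p)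

/-- Weighted Morrey norm adapted to a family `F` of cubes, for real-valued `f`. -/
def morreyNorm {n : ℕ} (F : Set (Cube n)) (lam p : ℝ)
    (w f : EuclideanSpace ℝ (Fin n) → ℝ) : ℝ≥0∞ :=
  morreyNormE F lam p w (fun x => ENNReal.ofReal |f x|)

/-- The Whitney-type family `W_{r₁,r₂}` of cubes with
`r₁ diam Q ≤ dist(Q,Ω) ≤ r₂ diam Q`. -/
def whitneyFamily {n : ℕ} (Ω : Set (EuclideanSpace ℝ (Fin n))) (r₁ r₂ : ℝ) :
    Set (Cube n) :=
  {Q | r₁ * Q.diam ≤ setDist Q.toSet Ω ∧ setDist Q.toSet Ω ≤ r₂ * Q.diam}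

/-- The Muckenhoupt-type condition `A_X` for the weighted Morrey space attached to `F`:
`⟨|f|⟩_Q ‖χ_Q‖ ≤ C ‖f χ_Q‖` for all `f` and all cubes `Q`. -/
def morreyA {n : ℕ} (F : Set (Cube n)) (lam p : ℝ)
    (w : EuclideanSpace ℝ (Fin n) → ℝ) (C : ℝ) : Prop :=
  ∀ (f : EuclideanSpace ℝ (Fin n) → ℝ) (Q : Cube n),
    avg Q f * morreyNorm F lam p w (Q.toSet.indicator fun _ => 1) ≤
      ENNReal.ofReal C * morreyNorm F lam p w (Q.toSet.indicator f)

/-- Boundedness of the Hardy–Littlewood maximal operator on the weighted Morrey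
space attached to `F`, with constant `C`. -/
def maximalBoundedOnMorrey {n : ℕ} (F : Set (Cube n)) (lam p : ℝ)
    (w : EuclideanSpace ℝ (Fin n) → ℝ) (C : ℝ) : Prop :=
  ∀ f : EuclideanSpace ℝ (Fin n) → ℝ,
    morreyNormE F lam p w (maximal f) ≤ ENNReal.ofReal C * morreyNorm F lam p w f

set_option maxHeartbeats 1000000 in
lemma setDist_le_dist' {n : ℕ} {A B : Set (EuclideanSpace ℝ (Fin n))} {x y}
    (hx : x ∈ A) (hy : y ∈ B) : setDist A B ≤ dist x y := by
  unfold setDist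
  have h2 : (⨅ y : B, dist x (y : EuclideanSpace ℝ (Fin n))) ≤ dist x y := by
    apply ciInf_le _ (⟨y, hy⟩ : B)
    exact ⟨0, by rintro r ⟨a, rfl⟩; exact dist_nonneg⟩
  have h3 : (⨅ (x : A) (y : B), dist (x : EuclideanSpace ℝ (Fin n)) (y : EuclideanSpace ℝ (Fin n)))
      ≤ ⨅ y : B, dist x (y : EuclideanSpace ℝ (Fin n)) := by
    apply ciInf_le _ (⟨x, hx⟩ : A)
    exact ⟨0, by rintro r ⟨a, rfl⟩; exact Real.iInf_nonneg fun _ => dist_nonneg⟩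
  exact h3.trans h2

lemma le_setDist' {n : ℕ} {A B : Set (EuclideanSpace ℝ (Fin n))} {c : ℝ}
    (hA : A.Nonempty) (hB : B.Nonempty)
    (h : ∀ x ∈ A, ∀ y ∈ B, c ≤ dist x y) : c ≤ setDist A B := by
  haveI := hA.to_subtype
  haveI := hB.to_subtype
  exact le_ciInf fun x => le_ciInf fun y => h x x.2 y y.2

lemma Cube.center_mem {n : ℕ} (R : Cube n) : R.center ∈ R.toSet := by
  intro i
  simp only [sub_self, abs_zero]
  have := R.side_pos
  linarith

lemma Cube.dist_le_diam {n : ℕ} (R : Cube n) {x y}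
    (hx : x ∈ R.toSet) (hy : y ∈ R.toSet) : dist x y ≤ R.diam := by
  rw [EuclideanSpace.dist_eq, Cube.diam]
  have hs := R.side_pos
  have h1 : ∑ i, dist (x i) (y i) ^ 2 ≤ (n : ℝ) * R.side ^ 2 := by
    have hbd : ∀ i ∈ Finset.univ, dist (x i) (y i) ^ 2 ≤ R.side ^ 2 := by
      intro i _
      have hxi := hx i
      have hyi := hy i
      have habs : |x i - y i| ≤ R.side := by
        have h3 : |x i - y i| ≤ |x i - R.center i| + |R.center i - y i| :=
          abs_sub_le _ _ _
        rw [abs_sub_comm (R.center i)] at h3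
        linarith
      rw [Real.dist_eq]
      exact pow_le_pow_left₀ (abs_nonneg _) habs 2
    calc ∑ i, dist (x i) (y i) ^ 2 ≤ ∑ _i : Fin n, R.side ^ 2 :=
        Finset.sum_le_sum hbd
      _ = (n : ℝ) * R.side ^ 2 := by simp [mul_comm]
  calc Real.sqrt (∑ i, dist (x i) (y i) ^ 2)
      ≤ Real.sqrt ((n : ℝ) * R.side ^ 2) := Real.sqrt_le_sqrt h1
    _ = Real.sqrt n * R.side := by
        rw [Real.sqrt_mul (Nat.cast_nonneg n), Real.sqrt_sq hs.le]

/-- if `Q ∈ W_{r₁,r₂}`, `R ∩ Q ≠ ∅` and `dist(R,Ω) ≤ α diam R` with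
`r₁ < α`, then `diam Q ≤ ((α+1)/(r₁−1)) diam R` and `Q ⊆ γR` with
`γ = 2(α+1)/(r₁−1) + 1`. -/
theorem statement8 {n : ℕ} (hn : 0 < n) (Ω : Set (EuclideanSpace ℝ (Fin n)))
    (hΩ : Ω.Nonempty) (r₁ r₂ α : ℝ) (hr₁ : 1 < r₁) (hα : r₁ < α) (Q R : Cube n)
    (hQ1 : r₁ * Q.diam ≤ setDist Q.toSet Ω) (hQ2 : setDist Q.toSet Ω ≤ r₂ * Q.diam)
    (hQR : (R.toSet ∩ Q.toSet).Nonempty) (hR : setDist R.toSet Ω ≤ α * R.diam) :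
    Q.diam ≤ (α + 1) / (r₁ - 1) * R.diam ∧
      Q.toSet ⊆ (R.dilate (2 * (α + 1) / (r₁ - 1) + 1) (by
        have h := div_nonneg (by linarith : (0:ℝ) ≤ 2 * (α + 1))
          (by linarith : (0:ℝ) ≤ r₁ - 1)
        linarith)).toSet := by
  obtain ⟨z, hzR, hzQ⟩ := hQR
  have hQs := Q.side_pos
  have hRs := R.side_pos
  have hsqrt : 0 < Real.sqrt n := Real.sqrt_pos.mpr (by exact_mod_cast hn)
  have hQd : 0 < Q.diam := mul_pos hsqrt hQs
  have hRd : 0 < R.diam := mul_pos hsqrt hRs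
  -- dist(Q,Ω) ≤ diam R + dist(R,Ω)
  have key : setDist Q.toSet Ω ≤ R.diam + setDist R.toSet Ω := by
    have h1 : setDist Q.toSet Ω - R.diam ≤ setDist R.toSet Ω := by
      apply le_setDist' ⟨R.center, R.center_mem⟩ hΩ
      intro w hw y hy
      have h2 : setDist Q.toSet Ω ≤ dist z y := setDist_le_dist' hzQ hy
      have h3 : dist z y ≤ dist z w + dist w y := dist_triangle _ _ _
      have h4 : dist z w ≤ R.diam := R.dist_le_diam hzR hw
      linarith
    linarith
  have hchain : r₁ * Q.diam ≤ (α + 1) * R.diam := by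
    calc r₁ * Q.diam ≤ setDist Q.toSet Ω := hQ1
      _ ≤ R.diam + setDist R.toSet Ω := key
      _ ≤ R.diam + α * R.diam := by linarith
      _ = (α + 1) * R.diam := by ring
  have hdiam : Q.diam ≤ (α + 1) / (r₁ - 1) * R.diam := by
    rw [div_mul_eq_mul_div, le_div_iff₀ (by linarith : (0:ℝ) < r₁ - 1)]
    nlinarith [hQd.le]
  refine ⟨hdiam, ?_⟩
  have hside : Q.side ≤ (α + 1) / (r₁ - 1) * R.side := by
    have h5 : Real.sqrt n * Q.side ≤ (α + 1) / (r₁ - 1) * (Real.sqrt n * R.side) := hdiam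
    nlinarith
  intro x hx i
  have hxi := hx i
  have hzQi := hzQ i
  have hzRi := hzR i
  simp only [Cube.dilate, Cube.toSet, Set.mem_setOf_eq] at *
  have h6 : |x i - R.center i| ≤ |x i - z i| + |z i - R.center i| := by
    have := abs_sub_le (x i) (z i) (R.center i); linarith
  have h7 : |x i - z i| ≤ |x i - Q.center i| + |z i - Q.center i| := by
    have := abs_sub_le (x i) (Q.center i) (z i)
    rw [abs_sub_comm (Q.center i)] at this; linarith
  have h8 : |x i - R.center i| ≤ Q.side + R.side / 2 := by linarith
  have h9 : 2 * (α + 1) / (r₁ - 1) = 2 * ((α + 1) / (r₁ - 1)) := by ring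
  calc |x i - R.center i| ≤ Q.side + R.side / 2 := h8
    _ ≤ (α + 1) / (r₁ - 1) * R.side + R.side / 2 := by linarith
    _ = (2 * (α + 1) / (r₁ - 1) + 1) * R.side / 2 := by rw [h9]; ring
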